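/- Let a, b, c ∈ ℝ with a ≠ 0, b ≠ 0, a² + b² + c² = 1, a − b − c ≥ −1, b − a − c ≥ −1, and 2c(c+1) ≥ 2ab + 1. Let ρ = diag(3/4, 0, 0, 1/4) and ρ̃ = (1/4)·(1₄ + (1/2)·σ₃⊗1₂ + (1/2)·1₂⊗σ₃ + a·σ₁⊗σ₂ + b·σ₂⊗σ₁ + c·σ₃⊗σ₃). Then there exist no U₁, U₂ ∈ SU(2) with ρ̃ = (U₁ ⊗ U₂) ρ (U₁ ⊗ U₂)†. -/

import Mathlib

open Matrix Complex BigOperators Kronecker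
open scoped ComplexOrder

/-- The three Pauli matrices σ₁, σ₂, σ₃ (indexed by `Fin 3`). -/
noncomputable def pauli : Fin 3 → Matrix (Fin 2) (Fin 2) ℂ
  | 0 => !![0, 1; 1, 0]
  | 1 => !![0, -Complex.I; Complex.I, 0]
  | 2 => !![1, 0; 0, -1]

/-- Membership in SU(2): unitary 2×2 complex matrix of determinant 1. -/
def IsSU2 (U : Matrix (Fin 2) (Fin 2) ℂ) : Prop := Uᴴ * U = 1 ∧ U.det = 1

/-- The separable state `ρ = diag(3/4, 0, 0, 1/4)` (basis ordering |00⟩,|01⟩,|10⟩,|11⟩). -/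
noncomputable def rhoCE : Matrix (Fin 2 × Fin 2) (Fin 2 × Fin 2) ℂ :=
  Matrix.diagonal fun p =>
    if p = ((0 : Fin 2), (0 : Fin 2)) then (3 / 4 : ℂ)
    else if p = ((1 : Fin 2), (1 : Fin 2)) then (1 / 4 : ℂ) else 0

/-- The state `ρ̃ = (1/4)(1₄ + (1/2) σ₃⊗1 + (1/2) 1⊗σ₃ + a σ₁⊗σ₂ + b σ₂⊗σ₁ + c σ₃⊗σ₃)`. -/
noncomputable def rhoTilde (a b c : ℝ) : Matrix (Fin 2 × Fin 2) (Fin 2 × Fin 2) ℂ :=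
  (1 / 4 : ℂ) • ((1 : Matrix (Fin 2 × Fin 2) (Fin 2 × Fin 2) ℂ)
    + (1 / 2 : ℂ) • (pauli 2 ⊗ₖ (1 : Matrix (Fin 2) (Fin 2) ℂ))
    + (1 / 2 : ℂ) • ((1 : Matrix (Fin 2) (Fin 2) ℂ) ⊗ₖ pauli 2)
    + (a : ℂ) • (pauli 0 ⊗ₖ pauli 1)
    + (b : ℂ) • (pauli 1 ⊗ₖ pauli 0)
    + (c : ℂ) • (pauli 2 ⊗ₖ pauli 2))

/-! Both partial traces of `ρ` and of `ρ̃` equal `diag(3/4, 1/4)`, and a partial trace transforms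
under `U₁ ⊗ U₂` by conjugation with the surviving factor. So `U₁` and `U₂` fix `diag(3/4, 1/4)`
under conjugation, hence commute with it, hence are diagonal since its eigenvalues are distinct.
Conjugating the diagonal `ρ` by the diagonal `U₁ ⊗ U₂` gives a diagonal matrix, whereas `ρ̃` has
the off-diagonal entries `-i(a + b)/4` and `i(a - b)/4`, which vanish only for `a = b = 0`. -/

namespace Matrix

variable {m n R : Type*} [Fintype m] [Fintype n]

def traceRight [AddCommMonoid R] (M : Matrix (m × n) (m × n) R) : Matrix m m R :=
  of fun i i' => ∑ j, M (i, j) (i', j)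

def traceLeft [AddCommMonoid R] (M : Matrix (m × n) (m × n) R) : Matrix n n R :=
  of fun j j' => ∑ i, M (i, j) (i, j')

theorem traceRight_kronecker_mul_mul_conjTranspose [DecidableEq n] [CommRing R] [StarRing R]
    (A : Matrix m m R) {B : Matrix n n R} (hB : Bᴴ * B = 1) (M : Matrix (m × n) (m × n) R) :
    traceRight ((A ⊗ₖ B) * M * (A ⊗ₖ B)ᴴ) = A * traceRight M * Aᴴ := by
  have hB' : ∀ l l', ∑ j, B j l * star (B j l') = if l' = l then 1 else 0 := by
    intro l l'
    simpa [mul_apply, one_apply, mul_comm] using congrFun (congrFun hB l') l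
  ext i i'
  simp only [traceRight, of_apply, mul_apply, kroneckerMap_apply, conjTranspose_apply,
    Fintype.sum_prod_type, Finset.sum_mul, Finset.mul_sum, star_mul']
  rw [Finset.sum_comm]
  refine Finset.sum_congr rfl fun k' _ => ?_
  rw [Finset.sum_comm]
  simp_rw [Finset.sum_comm (γ := n) (α := m)]
  refine Finset.sum_congr rfl fun k _ => Finset.sum_congr rfl fun l' _ => ?_
  rw [Finset.sum_comm]
  have hj : ∀ l, ∑ j, A i k * B j l * M (k, l) (k', l') * (star (A i' k') * star (B j l'))
      = A i k * M (k, l) (k', l') * star (A i' k') * if l' = l then 1 else 0 := by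
    intro l
    rw [← hB', Finset.mul_sum]
    exact Finset.sum_congr rfl fun j _ => by ring
  simp only [hj, mul_ite, mul_one, mul_zero, Finset.sum_ite_eq, Finset.mem_univ, if_true]

theorem traceLeft_kronecker_mul_mul_conjTranspose [DecidableEq m] [CommRing R] [StarRing R]
    {A : Matrix m m R} (hA : Aᴴ * A = 1) (B : Matrix n n R) (M : Matrix (m × n) (m × n) R) :
    traceLeft ((A ⊗ₖ B) * M * (A ⊗ₖ B)ᴴ) = B * traceLeft M * Bᴴ := by
  have hA' : ∀ k k', ∑ i, A i k * star (A i k') = if k' = k then 1 else 0 := by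
    intro k k'
    simpa [mul_apply, one_apply, mul_comm] using congrFun (congrFun hA k') k
  ext j j'
  simp only [traceLeft, of_apply, mul_apply, kroneckerMap_apply, conjTranspose_apply,
    Fintype.sum_prod_type, Finset.sum_mul, Finset.mul_sum, star_mul']
  simp_rw [Finset.sum_comm (γ := m) (α := n)]
  refine Finset.sum_congr rfl fun l' _ => Finset.sum_congr rfl fun l _ => ?_
  rw [Finset.sum_comm]
  refine Finset.sum_congr rfl fun k' _ => ?_
  rw [Finset.sum_comm]
  have hi : ∀ k, ∑ i, A i k * B j l * M (k, l) (k', l') * (star (A i k') * star (B j' l'))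
      = B j l * M (k, l) (k', l') * star (B j' l') * if k' = k then 1 else 0 := by
    intro k
    rw [← hA', Finset.mul_sum]
    exact Finset.sum_congr rfl fun i _ => by ring
  simp only [hi, mul_ite, mul_one, mul_zero, Finset.sum_ite_eq, Finset.mem_univ, if_true]

variable [DecidableEq n]

theorem commute_of_mul_mul_conjTranspose_eq [Semiring R] [StarRing R] {U D : Matrix n n R}
    (hU : Uᴴ * U = 1) (h : U * D * Uᴴ = D) : Commute U D :=
  calc U * D = U * D * (Uᴴ * U) := by rw [hU, Matrix.mul_one]
    _ = D * U := by rw [← Matrix.mul_assoc, h]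

theorem IsDiag.of_commute_diagonal [CommRing R] [NoZeroDivisors R] {d : n → R}
    (hd : Function.Injective d) {U : Matrix n n R} (h : Commute U (diagonal d)) : U.IsDiag := by
  intro i j hij
  have hentry := congrFun (congrFun h.eq i) j
  rw [mul_diagonal, diagonal_mul] at hentry
  have : (d i - d j) * U i j = 0 := by linear_combination -hentry
  exact (mul_eq_zero.mp this).resolve_left (sub_ne_zero.mpr (hd.ne hij))

theorem IsDiag.mul_diagonal_mul_conjTranspose [Semiring R] [StarRing R] {V : Matrix n n R}
    (hV : V.IsDiag) (d : n → R) : (V * diagonal d * Vᴴ).IsDiag := by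
  rw [← hV.diagonal_diag, diagonal_conjTranspose, diagonal_mul_diagonal, diagonal_mul_diagonal]
  exact isDiag_diagonal _

end Matrix

theorem traceRight_rhoCE : traceRight rhoCE = diagonal ![3 / 4, 1 / 4] := by
  ext i j
  fin_cases i <;> fin_cases j <;> simp [traceRight, rhoCE, Fin.sum_univ_two, Prod.ext_iff]

theorem traceLeft_rhoCE : traceLeft rhoCE = diagonal ![3 / 4, 1 / 4] := by
  ext i j
  fin_cases i <;> fin_cases j <;> simp [traceLeft, rhoCE, Fin.sum_univ_two, Prod.ext_iff]

theorem traceRight_rhoTilde (a b c : ℝ) :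
    traceRight (rhoTilde a b c) = diagonal ![3 / 4, 1 / 4] := by
  ext i j
  fin_cases i <;> fin_cases j <;> simp [traceRight, rhoTilde, pauli, Fin.sum_univ_two] <;> ring

theorem traceLeft_rhoTilde (a b c : ℝ) :
    traceLeft (rhoTilde a b c) = diagonal ![3 / 4, 1 / 4] := by
  ext i j
  fin_cases i <;> fin_cases j <;> simp [traceLeft, rhoTilde, pauli, Fin.sum_univ_two] <;> ring

theorem eq_zero_of_isDiag_rhoTilde {a b c : ℝ} (h : (rhoTilde a b c).IsDiag) : a = 0 ∧ b = 0 := by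
  have hsum := h (i := (0, 0)) (j := (1, 1)) (by decide)
  have hdiff := h (i := (0, 1)) (j := (1, 0)) (by decide)
  simp [rhoTilde, pauli] at hsum hdiff
  constructor
  · exact_mod_cast (by linear_combination (-I / 2) * (hdiff - hsum) + a * I_sq : (a : ℂ) = 0)
  · exact_mod_cast (by linear_combination (I / 2) * (hsum + hdiff) + b * I_sq : (b : ℂ) = 0)

theorem counterexample_not_LU_equivalent_general (a b c : ℝ)
    (ha : a ≠ 0) :
    ¬ ∃ U₁ U₂ : Matrix (Fin 2) (Fin 2) ℂ, IsSU2 U₁ ∧ IsSU2 U₂ ∧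
        rhoTilde a b c = (U₁ ⊗ₖ U₂) * rhoCE * (U₁ ⊗ₖ U₂)ᴴ := by
  rintro ⟨U₁, U₂, ⟨hU₁, -⟩, ⟨hU₂, -⟩, heq⟩
  have hd : Function.Injective ![(3 / 4 : ℂ), 1 / 4] := by
    intro i j
    fin_cases i <;> fin_cases j <;> norm_num
  have hU₁diag : U₁.IsDiag := by
    refine .of_commute_diagonal hd (commute_of_mul_mul_conjTranspose_eq hU₁ ?_)
    calc U₁ * diagonal _ * U₁ᴴ = traceRight ((U₁ ⊗ₖ U₂) * rhoCE * (U₁ ⊗ₖ U₂)ᴴ) := by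
          rw [traceRight_kronecker_mul_mul_conjTranspose U₁ hU₂, traceRight_rhoCE]
      _ = _ := by rw [← heq, traceRight_rhoTilde]
  have hU₂diag : U₂.IsDiag := by
    refine .of_commute_diagonal hd (commute_of_mul_mul_conjTranspose_eq hU₂ ?_)
    calc U₂ * diagonal _ * U₂ᴴ = traceLeft ((U₁ ⊗ₖ U₂) * rhoCE * (U₁ ⊗ₖ U₂)ᴴ) := by
          rw [traceLeft_kronecker_mul_mul_conjTranspose hU₁ U₂, traceLeft_rhoCE]
      _ = _ := by rw [← heq, traceLeft_rhoTilde]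
  have hconj : ((U₁ ⊗ₖ U₂) * rhoCE * (U₁ ⊗ₖ U₂)ᴴ).IsDiag :=
    (hU₁diag.kronecker hU₂diag).mul_diagonal_mul_conjTranspose _
  exact ha (eq_zero_of_isDiag_rhoTilde (heq ▸ hconj)).1

/-- For `a ≠ 0`, `b ≠ 0` and the stated constraints on `a, b, c`, the
states `ρ = diag(3/4,0,0,1/4)` and `ρ̃` are not local-unitary equivalent. -/
theorem counterexample_not_LU_equivalent (a b c : ℝ)
    (ha : a ≠ 0) (hb : b ≠ 0)
    (hnorm : a ^ 2 + b ^ 2 + c ^ 2 = 1)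
    (h1 : a - b - c ≥ -1) (h2 : b - a - c ≥ -1)
    (h3 : 2 * c * (c + 1) ≥ 2 * a * b + 1) :
    ¬ ∃ U₁ U₂ : Matrix (Fin 2) (Fin 2) ℂ, IsSU2 U₁ ∧ IsSU2 U₂ ∧
        rhoTilde a b c = (U₁ ⊗ₖ U₂) * rhoCE * (U₁ ⊗ₖ U₂)ᴴ :=
  counterexample_not_LU_equivalent_general a b c ha
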